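/- For every formula α in negation normal form, there exists a derivation from ⊥ to α using only atomic weakening (⊥ → a), switch, and equality steps, of length O(|α|) and size O(|α|²). -/

import Mathlib

/-- Formulae of the calculus of structures in negation normal form. -/
inductive Formula : Type
  | top : Formula
  | bot : Formula
  | atom : ℕ → Formula
  | natom : ℕ → Formula
  | or : Formula → Formula → Formula
  | and : Formula → Formula → Formula
deriving DecidableEq

/-- Boolean evaluation of a formula under an assignment. -/
def Formula.eval (v : ℕ → Bool) : Formula → Bool
  | .top => true
  | .bot => false
  | .atom n => v n
  | .natom n => !(v n)
  | .or a b => a.eval v || b.eval v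
  | .and a b => a.eval v && b.eval v

/-- Size of a formula: number of unit and atom occurrences. -/
def Formula.size : Formula → ℕ
  | .top => 1
  | .bot => 1
  | .atom _ => 1
  | .natom _ => 1
  | .or a b => a.size + b.size
  | .and a b => a.size + b.size

/-- De Morgan dual (negation in negation normal form). -/
def Formula.dual : Formula → Formula
  | .top => .bot
  | .bot => .top
  | .atom n => .natom n
  | .natom n => .atom n
  | .or a b => .and a.dual b.dual
  | .and a b => .or a.dual b.dual

/-- The equality relation `=` on formulae: commutativity, associativity, unit
laws, closed under reflexivity, symmetry, transitivity and context closure. -/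
inductive FEq : Formula → Formula → Prop
  | orComm (a b) : FEq (.or a b) (.or b a)
  | andComm (a b) : FEq (.and a b) (.and b a)
  | orAssoc (a b c) : FEq (.or (.or a b) c) (.or a (.or b c))
  | andAssoc (a b c) : FEq (.and (.and a b) c) (.and a (.and b c))
  | orBot (a) : FEq (.or a .bot) a
  | andTop (a) : FEq (.and a .top) a
  | topTop : FEq (.or .top .top) .top
  | botBot : FEq (.and .bot .bot) .bot
  | refl (a) : FEq a a
  | symm {a b} : FEq a b → FEq b a
  | trans {a b c} : FEq a b → FEq b c → FEq a c
  | orCongL {a b} (c) : FEq a b → FEq (.or a c) (.or b c)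
  | orCongR {a b} (c) : FEq a b → FEq (.or c a) (.or c b)
  | andCongL {a b} (c) : FEq a b → FEq (.and a c) (.and b c)
  | andCongR {a b} (c) : FEq a b → FEq (.and c a) (.and c b)

/-- Closure of a rule relation under arbitrary formula contexts. -/
inductive CtxStep (R : Formula → Formula → Prop) : Formula → Formula → Prop
  | base {a b} : R a b → CtxStep R a b
  | orL {a b} (c) : CtxStep R a b → CtxStep R (.or a c) (.or b c)
  | orR {a b} (c) : CtxStep R a b → CtxStep R (.or c a) (.or c b)
  | andL {a b} (c) : CtxStep R a b → CtxStep R (.and a c) (.and b c)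
  | andR {a b} (c) : CtxStep R a b → CtxStep R (.and c a) (.and c b)

/-- `Deriv R α β l s`: there is a derivation from premiss `α` to conclusion `β`
using rules from `R` (applied inside contexts), of length `l` and total size `s`
(the sum of the sizes of all formulae appearing in the derivation). -/
inductive Deriv (R : Formula → Formula → Prop) : Formula → Formula → ℕ → ℕ → Prop
  | refl (a) : Deriv R a a 0 a.size
  | step {a b c l s} : CtxStep R a b → Deriv R b c l s → Deriv R a c (l + 1) (s + a.size)

/-- Rules allowed in Lemma LemGWeak: atomic weakening, switch and equality. -/
inductive AwSwEq : Formula → Formula → Prop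
  | aw (a : ℕ) : AwSwEq .bot (.atom a)
  | aw' (a : ℕ) : AwSwEq .bot (.natom a)
  | sw (A B C : Formula) : AwSwEq (.and A (.or B C)) (.or (.and A B) C)
  | eqv {a b : Formula} : FEq a b → AwSwEq a b

/-!
Induction on `α`. An atom is a single weakening, and `⊤` comes from `⊥ = ⊥ ∧ (⊥ ∨ ⊤)` by one
switch. For `β ∨ γ` (resp. `β ∧ γ`) rewrite `⊥` as `⊥ ∨ ⊥` (resp. `⊥ ∧ ⊥`) and run the
derivations of `β` and `γ` one after the other, each inside the other's context. Lengths add up,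
so they stay linear; every formula of the derivation has size `O(|α|)`, so the total is quadratic.
-/

namespace Formula

theorem one_le_size (a : Formula) : 1 ≤ a.size := by
  induction a <;> simp only [size] <;> omega

end Formula

namespace Deriv

variable {R : Formula → Formula → Prop}

theorem single {a b : Formula} (h : R a b) : Deriv R a b 1 (b.size + a.size) :=
  step (.base h) (refl b)

theorem comp {a b c : Formula} {l₁ s₁ l₂ s₂ : ℕ}
    (d₁ : Deriv R a b l₁ s₁) (d₂ : Deriv R b c l₂ s₂) :
    ∃ s, Deriv R a c (l₁ + l₂) s ∧ s ≤ s₁ + s₂ := by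
  induction d₁ with
  | refl a => exact ⟨s₂, by simpa using d₂, by omega⟩
  | @step a a' b l s h _ ih =>
    obtain ⟨s', d, hs⟩ := ih d₂
    exact ⟨s' + a.size, by simpa [Nat.add_right_comm l l₂ 1] using d.step h, by omega⟩

theorem map {f : Formula → Formula} {k : ℕ}
    (hf : ∀ {a b}, CtxStep R a b → CtxStep R (f a) (f b)) (hsize : ∀ a, (f a).size = a.size + k)
    {a b : Formula} {l s : ℕ} (d : Deriv R a b l s) :
    Deriv R (f a) (f b) l (s + (l + 1) * k) := by
  induction d with
  | refl a => simpa [hsize] using refl (R := R) (f a)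
  | @step a a' b l s h _ ih =>
    convert ih.step (hf h) using 1
    rw [hsize]
    ring

theorem congr₂ {op : Formula → Formula → Formula}
    (hL : ∀ {a b} c, CtxStep R a b → CtxStep R (op a c) (op b c))
    (hR : ∀ {a b} c, CtxStep R a b → CtxStep R (op c a) (op c b))
    (hsize : ∀ a b, (op a b).size = a.size + b.size)
    {a₁ a₂ b₁ b₂ : Formula} {l₁ s₁ l₂ s₂ : ℕ}
    (d₁ : Deriv R a₁ b₁ l₁ s₁) (d₂ : Deriv R a₂ b₂ l₂ s₂) :
    ∃ s, Deriv R (op a₁ a₂) (op b₁ b₂) (l₁ + l₂) s ∧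
      s ≤ s₁ + (l₁ + 1) * a₂.size + (s₂ + (l₂ + 1) * b₁.size) :=
  (d₁.map (hL a₂) (hsize · a₂)).comp (d₂.map (hR b₁) fun a => (hsize b₁ a).trans (add_comm _ _))

end Deriv

-- Both constants are attained by `⊤`: three steps of total size 8.
def ShortDerivFromBot (α : Formula) : Prop :=
  ∃ l s, Deriv AwSwEq .bot α l s ∧ l < 4 * α.size ∧ s ≤ 8 * α.size ^ 2

namespace ShortDerivFromBot

theorem bot : ShortDerivFromBot .bot :=
  ⟨0, 1, .refl .bot, by simp [Formula.size], by simp [Formula.size]⟩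

theorem atom (n : ℕ) : ShortDerivFromBot (.atom n) :=
  ⟨1, 2, .single (.aw n), by simp [Formula.size], by simp [Formula.size]⟩

theorem natom (n : ℕ) : ShortDerivFromBot (.natom n) :=
  ⟨1, 2, .single (.aw' n), by simp [Formula.size], by simp [Formula.size]⟩

theorem top : ShortDerivFromBot .top := by
  have unfold : FEq .bot (.and .bot (.or .bot .top)) :=
    (FEq.andTop .bot).symm.trans <|
      .andCongR .bot <| (FEq.orBot .top).symm.trans (.orComm .top .bot)
  have fold : FEq (.or (.and .bot .bot) .top) .top :=
    (FEq.orCongL .top .botBot).trans <| (FEq.orComm .bot .top).trans (.orBot .top)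
  refine ⟨3, 8, ?_, by simp [Formula.size], by simp [Formula.size]⟩
  exact .step (.base (.eqv unfold)) <| .step (.base (.sw .bot .bot .top)) <| .single (.eqv fold)

theorem binary {op : Formula → Formula → Formula}
    (hL : ∀ {a b} c, CtxStep AwSwEq a b → CtxStep AwSwEq (op a c) (op b c))
    (hR : ∀ {a b} c, CtxStep AwSwEq a b → CtxStep AwSwEq (op c a) (op c b))
    (hsize : ∀ a b, (op a b).size = a.size + b.size) (hunit : FEq .bot (op .bot .bot))
    {β γ : Formula} (hβ : ShortDerivFromBot β) (hγ : ShortDerivFromBot γ) :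
    ShortDerivFromBot (op β γ) := by
  obtain ⟨lβ, sβ, dβ, hlβ, hsβ⟩ := hβ
  obtain ⟨lγ, sγ, dγ, hlγ, hsγ⟩ := hγ
  obtain ⟨s', d', hs'⟩ := Deriv.congr₂ hL hR hsize dβ dγ
  obtain ⟨s, d, hs⟩ := (Deriv.single (.eqv hunit)).comp d'
  have hβ₁ := β.one_le_size
  have hγ₁ := γ.one_le_size
  have hcross : (lγ + 1) * β.size ≤ 4 * γ.size * β.size := Nat.mul_le_mul_right _ hlγ
  simp only [hsize, Formula.size] at hs hs'
  refine ⟨1 + (lβ + lγ), s, d, ?_, ?_⟩ <;> rw [hsize]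
  · omega
  · nlinarith

end ShortDerivFromBot

theorem shortDerivFromBot : ∀ α : Formula, ShortDerivFromBot α
  | .top => .top
  | .bot => .bot
  | .atom n => .atom n
  | .natom n => .natom n
  | .or β γ => .binary CtxStep.orL CtxStep.orR (fun _ _ => rfl) (.symm (.orBot .bot))
      (shortDerivFromBot β) (shortDerivFromBot γ)
  | .and β γ => .binary CtxStep.andL CtxStep.andR (fun _ _ => rfl) (.symm .botBot)
      (shortDerivFromBot β) (shortDerivFromBot γ)

/-- Lemma LemGWeak: for every formula `α` there is a derivation
from `⊥` to `α` using only atomic weakening, switch and equality, of length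
`O(|α|)` and size `O(|α|²)`. -/
theorem atomic_weakening_derivable :
    ∃ C : ℕ, ∀ α : Formula, ∃ l s : ℕ,
      Deriv AwSwEq .bot α l s ∧
      l ≤ C * α.size ∧ s ≤ C * α.size ^ 2 := by
  refine ⟨8, fun α => ?_⟩
  obtain ⟨l, s, d, hl, hs⟩ := shortDerivFromBot α
  exact ⟨l, s, d, by omega, hs⟩
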